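/- Let $X,Y,Z,\gamma,\eta$ be non-negative functions on $[0,T]$, with $X$ and $Y$ absolutely continuous, $Z$ measurable, $\gamma$ and $\eta$ integrable over $[0,T]$, and let $A>0$ be a constant. Suppose that for almost every $t\in[0,T]$: $\frac{d}{dt}X(t)\le A Z^{1/2}(t)$ and $\frac{d}{dt}Y(t)+Z(t)\le \gamma(t)Y(t)+\eta(t)X^2(t)$, and that $X(0)=0$ and $Y(0)=0$. Then $X(t)=0$ and $Y(t)=0$ for all $t\in[0,T]$, and $Z(t)=0$ for almost every $t\in[0,T]$. -/

import Mathlib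

open MeasureTheory Real Filter Set Topology

/-!
Cauchy–Schwarz turns `X' ≤ A √Z` into `X t ^ 2 ≤ A ^ 2 T ∫₀ᵗ Z`, so the energy
`V t = Y t + ∫₀ᵗ Z` satisfies `V t ≤ ∫₀ᵗ (γ + A ^ 2 T η) V`. Grönwall's inequality with zero
initial value gives `V = 0`, hence `Y = 0` and `∫₀ᵗ Z = 0`, so `Z = 0` a.e. and then `X = 0`.
-/

section IntervalLemmas

variable {f g : ℝ → ℝ} {a b : ℝ}

lemma IntervalIntegrable.mono_Icc (hf : IntervalIntegrable f volume a b) {c d : ℝ}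
    (hc : c ∈ Icc a b) (hd : d ∈ Icc a b) : IntervalIntegrable f volume c d :=
  hf.mono_set (uIcc_subset_uIcc (Icc_subset_uIcc hc) (Icc_subset_uIcc hd))

lemma IntervalIntegrable.sqrt (hf : IntervalIntegrable f volume a b) :
    IntervalIntegrable (fun x => √(f x)) volume a b := by
  refine (hf.norm.add (intervalIntegrable_const (c := 1))).mono_fun'
    (continuous_sqrt.comp_aestronglyMeasurable hf.aestronglyMeasurable_restrict_uIoc)
    (ae_of_all _ fun x => ?_)
  dsimp only
  rw [norm_of_nonneg (sqrt_nonneg _), sqrt_le_iff]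
  constructor <;> nlinarith [norm_nonneg (f x), le_norm_self (f x)]

lemma IntervalIntegrable.of_nonneg_of_ae_le (hab : a ≤ b) (hf0 : ∀ t ∈ Icc a b, 0 ≤ f t)
    (hfm : AEStronglyMeasurable f (volume.restrict (Icc a b)))
    (hg : IntervalIntegrable g volume a b)
    (hfg : ∀ᵐ t ∂volume.restrict (Icc a b), f t ≤ g t) : IntervalIntegrable f volume a b := by
  rw [intervalIntegrable_iff_integrableOn_Icc_of_le hab] at hg ⊢
  refine hg.mono' hfm ?_
  filter_upwards [hfg, ae_restrict_mem measurableSet_Icc] with t hfgt ht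
  rwa [norm_of_nonneg (hf0 t ht)]

lemma ContinuousOn.of_eq_add_integral (hf : IntervalIntegrable f volume a b)
    (hg : ∀ t ∈ Icc a b, g t = g a + ∫ s in a..t, f s) : ContinuousOn g (Icc a b) :=
  (continuousOn_const.add ((intervalIntegral.continuousOn_primitive_interval' hf
    left_mem_uIcc).mono Icc_subset_uIcc)).congr hg

lemma monotoneOn_primitive_of_nonneg (hf : IntervalIntegrable f volume a b)
    (hf0 : ∀ t ∈ Icc a b, 0 ≤ f t) : MonotoneOn (fun t => ∫ s in a..t, f s) (Icc a b) := by
  intro x hx y hy hxy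
  dsimp only
  rw [← intervalIntegral.integral_add_adjacent_intervals
    (hf.mono_Icc (left_mem_Icc.2 (hx.1.trans hx.2)) hx) (hf.mono_Icc hx hy)]
  exact le_add_of_nonneg_right
    (intervalIntegral.integral_nonneg hxy fun t ht => hf0 t ⟨hx.1.trans ht.1, ht.2.trans hy.2⟩)

/-- Cauchy–Schwarz on an interval, from the nonnegativity of the quadratic
`c ↦ ∫ (f - c)²`. -/
lemma sq_integral_le_mul_integral_sq (hab : a ≤ b) (hf : IntervalIntegrable f volume a b)
    (hf2 : IntervalIntegrable (fun x => f x ^ 2) volume a b) :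
    (∫ x in a..b, f x) ^ 2 ≤ (b - a) * ∫ x in a..b, f x ^ 2 := by
  have hquad : ∀ c : ℝ, 0 ≤ (b - a) * (c * c) + (-2 * ∫ x in a..b, f x) * c +
      ∫ x in a..b, f x ^ 2 := by
    intro c
    have h : ∫ x in a..b, (f x - c) ^ 2 =
        (b - a) * (c * c) + (-2 * ∫ x in a..b, f x) * c + ∫ x in a..b, f x ^ 2 := by
      simp only [sub_sq]
      have h2fc : IntervalIntegrable (fun x => 2 * f x * c) volume a b :=
        (hf.const_mul 2).mul_const c
      rw [intervalIntegral.integral_add (hf2.sub h2fc) intervalIntegrable_const,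
        intervalIntegral.integral_sub hf2 h2fc, intervalIntegral.integral_mul_const,
        intervalIntegral.integral_const_mul, intervalIntegral.integral_const, smul_eq_mul]
      ring
    exact h ▸ intervalIntegral.integral_nonneg hab fun x _ => sq_nonneg _
  have hdisc := discrim_le_zero hquad
  rw [discrim] at hdisc
  nlinarith

lemma ae_restrict_Icc_eq_zero_of_integral_eq_zero (hab : a ≤ b)
    (hf0 : ∀ t ∈ Icc a b, 0 ≤ f t) (hf : IntervalIntegrable f volume a b)
    (h : ∫ t in a..b, f t = 0) : ∀ᵐ t ∂volume.restrict (Icc a b), f t = 0 := by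
  have hnn : 0 ≤ᵐ[volume.restrict (Ioc a b)] f := by
    filter_upwards [ae_restrict_mem measurableSet_Ioc] with t ht
    exact hf0 t (Ioc_subset_Icc_self ht)
  rw [← Measure.restrict_congr_set Ioc_ae_eq_Icc]
  exact (intervalIntegral.integral_eq_zero_iff_of_le_of_nonneg_ae hab hnn hf).1 h

end IntervalLemmas

/-- `W t = ∫ a..t, φ V` is nondecreasing and dominates `V`, so `W t ≤ (∫ x..t, φ) * W t` once
`W x = 0`: the zero set of `W` spreads to the right of each of its points. -/
lemma eqOn_zero_of_le_integral_mul {φ V : ℝ → ℝ} {a b : ℝ} (hab : a ≤ b)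
    (hφ : IntervalIntegrable φ volume a b)
    (hφ0 : ∀ t ∈ Icc a b, 0 ≤ φ t) (hV : ContinuousOn V (Icc a b))
    (hV0 : ∀ t ∈ Icc a b, 0 ≤ V t) (hle : ∀ t ∈ Icc a b, V t ≤ ∫ s in a..t, φ s * V s) :
    EqOn V 0 (Icc a b) := by
  set W : ℝ → ℝ := fun t => ∫ s in a..t, φ s * V s
  have hφV : IntervalIntegrable (fun s => φ s * V s) volume a b :=
    hφ.mul_continuousOn (by rwa [uIcc_of_le hab])
  have hW_mono : MonotoneOn W (Icc a b) :=
    monotoneOn_primitive_of_nonneg hφV fun t ht => mul_nonneg (hφ0 t ht) (hV0 t ht)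
  have hW_cont : ContinuousOn W (Icc a b) :=
    (intervalIntegral.continuousOn_primitive_interval' hφV left_mem_uIcc).mono Icc_subset_uIcc
  suffices Icc a b ⊆ W ⁻¹' {0} from fun t ht =>
    le_antisymm ((hle t ht).trans_eq (this ht)) (hV0 t ht)
  refine IsClosed.Icc_subset_of_forall_mem_nhdsWithin ?_ (by simp [W]) ?_
  · rw [inter_comm]
    exact hW_cont.preimage_isClosed_of_isClosed isClosed_Icc isClosed_singleton
  rintro x ⟨hWx, hx⟩
  have hx' : x ∈ Icc a b := Ico_subset_Icc_self hx
  have hright : Icc a b ∈ 𝓝[>] x :=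
    mem_of_superset (Ioo_mem_nhdsGT hx.2)
      (Ioo_subset_Icc_self.trans (Icc_subset_Icc_left hx.1))
  have hΦ : ContinuousWithinAt (fun t => ∫ s in x..t, φ s) (Ioi x) x :=
    (((intervalIntegral.continuousOn_primitive_interval' hφ (Icc_subset_uIcc hx')).mono
      Icc_subset_uIcc) x hx').mono_of_mem_nhdsWithin hright
  have hsmall : ∀ᶠ t in 𝓝[>] x, ∫ s in x..t, φ s < 1 :=
    hΦ (by simpa using Iio_mem_nhds one_pos)
  filter_upwards [hsmall, hright, self_mem_nhdsWithin] with t hφt ht hxt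
  have hWt : W t ≤ (∫ s in x..t, φ s) * W t := calc
    W t = W x + ∫ s in x..t, φ s * V s :=
      (intervalIntegral.integral_add_adjacent_intervals (hφV.mono_Icc (left_mem_Icc.2 hab) hx')
        (hφV.mono_Icc hx' ht)).symm
    _ = ∫ s in x..t, φ s * V s := by rw [show W x = 0 from hWx, zero_add]
    _ ≤ ∫ s in x..t, φ s * W t := by
      refine intervalIntegral.integral_mono_on (le_of_lt hxt) (hφV.mono_Icc hx' ht)
        ((hφ.mono_Icc hx' ht).mul_const _) fun s hs => ?_
      have hs' : s ∈ Icc a b := ⟨hx.1.trans hs.1, hs.2.trans ht.2⟩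
      exact mul_le_mul_of_nonneg_left ((hle s hs').trans (hW_mono hs' ht hs.2)) (hφ0 s hs')
    _ = (∫ s in x..t, φ s) * W t := intervalIntegral.integral_mul_const _ _
  have hWt0 : 0 ≤ W t := (show W a = 0 by simp [W]) ▸ hW_mono (left_mem_Icc.2 hab) ht ht.1
  show W t = 0
  nlinarith

section TwoFunction

variable {X X' Y Y' Z g : ℝ → ℝ} {A a b : ℝ}

lemma sq_le_mul_integral_of_deriv_le_mul_sqrt (hX0 : ∀ t ∈ Icc a b, 0 ≤ X t)
    (hZ0 : ∀ t ∈ Icc a b, 0 ≤ Z t) (hZ : IntervalIntegrable Z volume a b)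
    (hX' : IntervalIntegrable X' volume a b) (hX : ∀ t ∈ Icc a b, X t = ∫ s in a..t, X' s)
    (hX'Z : ∀ᵐ t ∂volume.restrict (Icc a b), X' t ≤ A * √(Z t)) (t : ℝ) (ht : t ∈ Icc a b) :
    X t ^ 2 ≤ A ^ 2 * (b - a) * ∫ s in a..t, Z s := by
  have ha : a ∈ Icc a b := left_mem_Icc.2 (ht.1.trans ht.2)
  have hZt := hZ.mono_Icc ha ht
  have hXt : X t ≤ A * ∫ s in a..t, √(Z s) := by
    rw [hX t ht, ← intervalIntegral.integral_const_mul]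
    exact intervalIntegral.integral_mono_ae_restrict ht.1 (hX'.mono_Icc ha ht)
      (hZt.sqrt.const_mul A)
      (ae_restrict_of_ae_restrict_of_subset (Icc_subset_Icc_right ht.2) hX'Z)
  have hsq : EqOn (fun s => √(Z s) ^ 2) Z (uIcc a t) := fun s hs =>
    sq_sqrt (hZ0 s (Icc_subset_Icc_right ht.2 (uIcc_of_le ht.1 ▸ hs)))
  have hCS : (∫ s in a..t, √(Z s)) ^ 2 ≤ (t - a) * ∫ s in a..t, Z s := by
    simpa only [intervalIntegral.integral_congr hsq] using sq_integral_le_mul_integral_sq ht.1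
      hZt.sqrt ((intervalIntegrable_congr (hsq.mono uIoc_subset_uIcc)).2 hZt)
  have hu0 : 0 ≤ ∫ s in a..t, Z s :=
    intervalIntegral.integral_nonneg ht.1 fun s hs => hZ0 s (Icc_subset_Icc_right ht.2 hs)
  calc X t ^ 2 ≤ (A * ∫ s in a..t, √(Z s)) ^ 2 := pow_le_pow_left₀ (hX0 t ht) hXt 2
    _ ≤ A ^ 2 * ((t - a) * ∫ s in a..t, Z s) := by rw [mul_pow]; gcongr
    _ ≤ A ^ 2 * (b - a) * ∫ s in a..t, Z s := by
      rw [← mul_assoc]; gcongr; exact ht.2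

lemma add_integral_le_integral_of_deriv_add_le (hY' : IntervalIntegrable Y' volume a b)
    (hZ : IntervalIntegrable Z volume a b) (hg : IntervalIntegrable g volume a b)
    (hY : ∀ t ∈ Icc a b, Y t = ∫ s in a..t, Y' s)
    (hYZ : ∀ᵐ t ∂volume.restrict (Icc a b), Y' t + Z t ≤ g t) (t : ℝ) (ht : t ∈ Icc a b) :
    Y t + ∫ s in a..t, Z s ≤ ∫ s in a..t, g s := by
  have ha : a ∈ Icc a b := left_mem_Icc.2 (ht.1.trans ht.2)
  rw [hY t ht, ← intervalIntegral.integral_add (hY'.mono_Icc ha ht) (hZ.mono_Icc ha ht)]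
  exact intervalIntegral.integral_mono_ae_restrict ht.1
    ((hY'.mono_Icc ha ht).add (hZ.mono_Icc ha ht)) (hg.mono_Icc ha ht)
    (ae_restrict_of_ae_restrict_of_subset (Icc_subset_Icc_right ht.2) hYZ)

lemma add_integral_le_integral_mul_of_deriv_add_le {γ η : ℝ → ℝ} {C : ℝ} (hC : 0 ≤ C)
    (hY0 : ∀ t ∈ Icc a b, 0 ≤ Y t) (hZ0 : ∀ t ∈ Icc a b, 0 ≤ Z t)
    (hγ0 : ∀ t ∈ Icc a b, 0 ≤ γ t) (hη0 : ∀ t ∈ Icc a b, 0 ≤ η t)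
    (hX : ∀ t ∈ Icc a b, X t ^ 2 ≤ C * ∫ s in a..t, Z s)
    (hY' : IntervalIntegrable Y' volume a b) (hZ : IntervalIntegrable Z volume a b)
    (hg : IntervalIntegrable (fun t => γ t * Y t + η t * X t ^ 2) volume a b)
    (hφV : IntervalIntegrable (fun t => (γ t + C * η t) * (Y t + ∫ s in a..t, Z s)) volume a b)
    (hY : ∀ t ∈ Icc a b, Y t = ∫ s in a..t, Y' s)
    (hYZ : ∀ᵐ t ∂volume.restrict (Icc a b), Y' t + Z t ≤ γ t * Y t + η t * X t ^ 2)
    (t : ℝ) (ht : t ∈ Icc a b) :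
    Y t + ∫ s in a..t, Z s ≤ ∫ s in a..t, (γ s + C * η s) * (Y s + ∫ r in a..s, Z r) := by
  have ha : a ∈ Icc a b := left_mem_Icc.2 (ht.1.trans ht.2)
  refine (add_integral_le_integral_of_deriv_add_le hY' hZ hg hY hYZ t ht).trans
    (intervalIntegral.integral_mono_on ht.1 (hg.mono_Icc ha ht) (hφV.mono_Icc ha ht)
      fun s hs => ?_)
  have hs' : s ∈ Icc a b := Icc_subset_Icc_right ht.2 hs
  have hu0 : 0 ≤ ∫ r in a..s, Z r :=
    intervalIntegral.integral_nonneg hs.1 fun r hr => hZ0 r ⟨hr.1, hr.2.trans hs'.2⟩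
  nlinarith [mul_le_mul_of_nonneg_left (hX s hs') (hη0 s hs'), mul_nonneg (hγ0 s hs') hu0,
    mul_nonneg hC (mul_nonneg (hη0 s hs') (hY0 s hs'))]

end TwoFunction

theorem two_function_gronwall_vanishing_general
    (T : ℝ) (hT : 0 ≤ T) (A : ℝ) (X X' Y Y' Z γ η : ℝ → ℝ)
    (hX_nonneg : ∀ t ∈ Set.Icc 0 T, 0 ≤ X t)
    (hY_nonneg : ∀ t ∈ Set.Icc 0 T, 0 ≤ Y t)
    (hZ_nonneg : ∀ t ∈ Set.Icc 0 T, 0 ≤ Z t)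
    (hγ_nonneg : ∀ t ∈ Set.Icc 0 T, 0 ≤ γ t)
    (hη_nonneg : ∀ t ∈ Set.Icc 0 T, 0 ≤ η t)
    (hZ_meas : AEStronglyMeasurable Z (volume.restrict (Set.Icc 0 T)))
    (hγ_int : IntervalIntegrable γ volume 0 T)
    (hη_int : IntervalIntegrable η volume 0 T)
    (hX'_int : IntervalIntegrable X' volume 0 T)
    (hY'_int : IntervalIntegrable Y' volume 0 T)
    (hX_ac : ∀ t ∈ Set.Icc 0 T, X t = X 0 + ∫ s in (0:ℝ)..t, X' s)
    (hY_ac : ∀ t ∈ Set.Icc 0 T, Y t = Y 0 + ∫ s in (0:ℝ)..t, Y' s)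
    (hODE₁ : ∀ᵐ t ∂(volume.restrict (Set.Icc 0 T)), X' t ≤ A * Real.sqrt (Z t))
    (hODE₂ : ∀ᵐ t ∂(volume.restrict (Set.Icc 0 T)),
      Y' t + Z t ≤ γ t * Y t + η t * X t ^ 2)
    (hX0 : X 0 = 0) (hY0 : Y 0 = 0) :
    (∀ t ∈ Set.Icc 0 T, X t = 0 ∧ Y t = 0) ∧
      (∀ᵐ t ∂(volume.restrict (Set.Icc 0 T)), Z t = 0) := by
  have hXc := ContinuousOn.of_eq_add_integral hX'_int hX_ac
  have hYc := ContinuousOn.of_eq_add_integral hY'_int hY_ac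
  simp only [hX0, hY0, zero_add] at hX_ac hY_ac
  have hg : IntervalIntegrable (fun t => γ t * Y t + η t * X t ^ 2) volume 0 T := by
    rw [← uIcc_of_le hT] at hXc hYc
    exact (hγ_int.mul_continuousOn hYc).add (hη_int.mul_continuousOn (hXc.pow 2))
  have hZ : IntervalIntegrable Z volume 0 T :=
    .of_nonneg_of_ae_le hT hZ_nonneg hZ_meas (hg.sub hY'_int) <| by
      filter_upwards [hODE₂] with t ht using by linarith
  have hu0 (t : ℝ) (ht : t ∈ Icc 0 T) : 0 ≤ ∫ s in (0:ℝ)..t, Z s :=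
    intervalIntegral.integral_nonneg ht.1 fun s hs => hZ_nonneg s (Icc_subset_Icc_right ht.2 hs)
  have hX_sq := sq_le_mul_integral_of_deriv_le_mul_sqrt hX_nonneg hZ_nonneg hZ hX'_int hX_ac hODE₁
  rw [sub_zero] at hX_sq
  have hφ : IntervalIntegrable (fun t => γ t + A ^ 2 * T * η t) volume 0 T :=
    hγ_int.add (hη_int.const_mul _)
  have hVc : ContinuousOn (fun t => Y t + ∫ s in (0:ℝ)..t, Z s) (Icc 0 T) :=
    hYc.add ((intervalIntegral.continuousOn_primitive_interval' hZ left_mem_uIcc).mono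
      Icc_subset_uIcc)
  have hV : EqOn (fun t => Y t + ∫ s in (0:ℝ)..t, Z s) 0 (Icc 0 T) :=
    eqOn_zero_of_le_integral_mul hT hφ
      (fun t ht => by have := hγ_nonneg t ht; have := hη_nonneg t ht; positivity)
      hVc (fun t ht => add_nonneg (hY_nonneg t ht) (hu0 t ht))
      (add_integral_le_integral_mul_of_deriv_add_le (by positivity) hY_nonneg hZ_nonneg
        hγ_nonneg hη_nonneg hX_sq hY'_int hZ hg
        (hφ.mul_continuousOn (by rwa [uIcc_of_le hT])) hY_ac hODE₂)
  have hYu (t : ℝ) (ht : t ∈ Icc 0 T) : Y t = 0 ∧ ∫ s in (0:ℝ)..t, Z s = 0 :=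
    (add_eq_zero_iff_of_nonneg (hY_nonneg t ht) (hu0 t ht)).1 (hV ht)
  refine ⟨fun t ht => ⟨?_, (hYu t ht).1⟩,
    ae_restrict_Icc_eq_zero_of_integral_eq_zero hT hZ_nonneg hZ (hYu T ⟨hT, le_rfl⟩).2⟩
  have hX_sq_t := hX_sq t ht
  rw [(hYu t ht).2, mul_zero] at hX_sq_t
  exact pow_eq_zero_iff two_ne_zero |>.1 (le_antisymm hX_sq_t (sq_nonneg _))

/-- **Vanishing case of the two-function Grönwall-type lemma.** Under the hypotheses of
the two-function Grönwall lemma, if moreover `X 0 = 0` and `Y 0 = 0`, then `X t = 0` and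
`Y t = 0` for all `t ∈ [0, T]`, and `Z t = 0` for almost every `t ∈ [0, T]`. -/
theorem two_function_gronwall_vanishing
    (T : ℝ) (hT : 0 ≤ T) (A : ℝ) (hA : 0 < A) (X X' Y Y' Z γ η : ℝ → ℝ)
    (hX_nonneg : ∀ t ∈ Set.Icc 0 T, 0 ≤ X t)
    (hY_nonneg : ∀ t ∈ Set.Icc 0 T, 0 ≤ Y t)
    (hZ_nonneg : ∀ t ∈ Set.Icc 0 T, 0 ≤ Z t)
    (hγ_nonneg : ∀ t ∈ Set.Icc 0 T, 0 ≤ γ t)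
    (hη_nonneg : ∀ t ∈ Set.Icc 0 T, 0 ≤ η t)
    (hZ_meas : AEStronglyMeasurable Z (volume.restrict (Set.Icc 0 T)))
    (hγ_int : IntervalIntegrable γ volume 0 T)
    (hη_int : IntervalIntegrable η volume 0 T)
    (hX'_int : IntervalIntegrable X' volume 0 T)
    (hY'_int : IntervalIntegrable Y' volume 0 T)
    (hX_ac : ∀ t ∈ Set.Icc 0 T, X t = X 0 + ∫ s in (0:ℝ)..t, X' s)
    (hY_ac : ∀ t ∈ Set.Icc 0 T, Y t = Y 0 + ∫ s in (0:ℝ)..t, Y' s)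
    (hODE₁ : ∀ᵐ t ∂(volume.restrict (Set.Icc 0 T)), X' t ≤ A * Real.sqrt (Z t))
    (hODE₂ : ∀ᵐ t ∂(volume.restrict (Set.Icc 0 T)),
      Y' t + Z t ≤ γ t * Y t + η t * X t ^ 2)
    (hX0 : X 0 = 0) (hY0 : Y 0 = 0) :
    (∀ t ∈ Set.Icc 0 T, X t = 0 ∧ Y t = 0) ∧
      (∀ᵐ t ∂(volume.restrict (Set.Icc 0 T)), Z t = 0) :=
  two_function_gronwall_vanishing_general T hT A X X' Y Y' Z γ η hX_nonneg hY_nonneg hZ_nonneg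
    hγ_nonneg hη_nonneg hZ_meas hγ_int hη_int hX'_int hY'_int hX_ac hY_ac hODE₁ hODE₂ hX0 hY0
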